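/- The map φ is injective on the upper half of ranks: if u and u′ are necklaces of length n with 2·rank(u) > n and 2·rank(u′) > n and φ(u) = φ(u′), then u = u′. -/

import Mathlib

/-!
Common definitions: binary words of length `n`, rotations, necklaces (the quotient
poset `Bₙ/Cₙ`), the cyclic matching procedure, Lyndon words, the map `φ`,
crossing pairs, and the words `w_t`.

Throughout, a binary word of length `n` is a function `Fin n → Bool`, where `true`
encodes the letter `1` and `false` the letter `0`.
-/

/-- A binary word of length `n`: `true` encodes the letter `1`, `false` the letter `0`. -/
abbrev Word (n : ℕ) := Fin n → Bool

variable {n : ℕ} [NeZero n]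

/-- The rotation `σ_i`, shifting the letters of `w` cyclically by `i` positions (so the
letter at position `j` of `w` appears at position `j + i` of `rot i w`). -/
def rot (i : Fin n) (w : Word n) : Word n := fun j => w (j - i)

lemma rot_rot (i j : Fin n) (w : Word n) : rot i (rot j w) = rot (j + i) w := by
  funext k
  simp [rot, sub_sub, add_comm]

/-- Two words are equivalent when one is a cyclic rotation of the other. -/
def rotSetoid (n : ℕ) [NeZero n] : Setoid (Word n) where
  r w w' := ∃ i : Fin n, rot i w = w'
  iseqv := by
    refine ⟨fun w => ⟨0, ?_⟩, ?_, ?_⟩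
    · funext j; simp [rot]
    · rintro w w' ⟨i, rfl⟩
      refine ⟨-i, ?_⟩
      rw [rot_rot]
      funext j; simp [rot]
    · rintro w w' w'' ⟨i, rfl⟩ ⟨j, rfl⟩
      exact ⟨i + j, (rot_rot j i w).symm⟩

/-- A necklace: an equivalence class of binary words under cyclic rotation. -/
abbrev Necklace (n : ℕ) [NeZero n] := Quotient (rotSetoid n)

/-- The necklace of a word. -/
def nec (w : Word n) : Necklace n := Quotient.mk (rotSetoid n) w

/-- The number of `1`s in a word. -/
def wt (w : Word n) : ℕ := (Finset.univ.filter fun i => w i = true).card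

/-- The number of `0`s in a word. -/
def zeros (w : Word n) : ℕ := (Finset.univ.filter fun i => w i = false).card

/-- The rank of a necklace: the number of `1`s in any representative. -/
noncomputable def rank (u : Necklace n) : ℕ := wt (Quotient.out u)

/-- The set of positions belonging to some pair of `M`. -/
def matchedPos (M : Finset (Fin n × Fin n)) : Finset (Fin n) :=
  M.image Prod.fst ∪ M.image Prod.snd

/-- `j` is the first position outside `S` encountered strictly after `i` in the cyclic
order `i+1, i+2, …` (indices mod `n`). -/
def FirstAfter (S : Finset (Fin n)) (i j : Fin n) : Prop :=
  j ∉ S ∧ j ≠ i ∧ ∀ k : Fin n, k ∉ S → k ≠ i → (j - i).val ≤ (k - i).val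

/-- One step of the cyclic matching procedure on the word `w`: choose an as-yet-unmatched
position `i` carrying the letter `0` such that the first as-yet-unmatched position `j`
after `i` in cyclic order carries the letter `1`, and declare `{i, j}` a matched pair
(recorded as the ordered pair `(i, j)`, the `0`-position first). -/
inductive MatchStep (w : Word n) :
    Finset (Fin n × Fin n) → Finset (Fin n × Fin n) → Prop
  | step {M : Finset (Fin n × Fin n)} {i j : Fin n}
      (hi : i ∉ matchedPos M) (hw : w i = false)
      (hj : FirstAfter (matchedPos M) i j) (hj1 : w j = true) :
      MatchStep w M (insert (i, j) M)

/-- A maximal execution of the cyclic matching procedure on `w`, starting from the empty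
matching: `M` is reachable from `∅` by matching steps and no further step is possible. -/
def IsMaximalMatching (w : Word n) (M : Finset (Fin n × Fin n)) : Prop :=
  Relation.ReflTransGen (MatchStep w) ∅ M ∧ ∀ M', ¬ MatchStep w M M'

/-- The cyclic matching of `w`: the set of matched pairs produced by (any) maximal
execution of the cyclic matching procedure. -/
noncomputable def matching (w : Word n) : Finset (Fin n × Fin n) :=
  letI := Classical.dec (∃ M, IsMaximalMatching w M)
  if h : ∃ M, IsMaximalMatching w M then h.choose else ∅

/-- The unmatched positions of `w`: positions belonging to no matched pair. -/
noncomputable def unmatchedPos (w : Word n) : Finset (Fin n) :=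
  Finset.univ \ matchedPos (matching w)

/-- Lexicographic comparison of words with respect to the letter order `1 ≺ 0`
(recall `true` encodes `1` and `false` encodes `0`). -/
def lexLE (w w' : Word n) : Prop :=
  w = w' ∨ ∃ i : Fin n, (∀ j : Fin n, j < i → w j = w' j) ∧ w i = true ∧ w' i = false

/-- A word is Lyndon if it is lexicographically smallest among all of its rotations,
with respect to the letter order `1 ≺ 0`. -/
def IsLyndon (w : Word n) : Prop := ∀ i : Fin n, lexLE w (rot i w)

/-- The Lyndon rearrangement of `w`: its lexicographically smallest rotation. -/
noncomputable def lyndonOf (w : Word n) : Word n :=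
  letI := Classical.dec (∃ i : Fin n, IsLyndon (rot i w))
  if h : ∃ i : Fin n, IsLyndon (rot i w) then rot h.choose w else w

/-- Change the letter at the rightmost unmatched position of `w` to `0`. -/
noncomputable def flipTop (w : Word n) : Word n :=
  if h : (unmatchedPos w).Nonempty then
    Function.update w ((unmatchedPos w).max' h) false
  else w

/-- The map `φ`: take the Lyndon rearrangement of a representative and change the letter
at its rightmost unmatched position (which carries a `1` on the upper half of ranks)
to `0`. -/
noncomputable def phi (u : Necklace n) : Necklace n :=
  nec (flipTop (lyndonOf (Quotient.out u)))

/-- `x` lies strictly inside the cyclic arc running from `i` (exclusive) to `k`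
(exclusive), in the cyclic order of positions. -/
def StrictBtw (i x k : Fin n) : Prop :=
  0 < (x - i).val ∧ (x - i).val < (k - i).val

/-- The pairs `{i, k}` and `{j, l}` cross: exactly one of `j, l` lies strictly inside one
of the two cyclic arcs determined by `i` and `k`. -/
def Crosses (i k j l : Fin n) : Prop := Xor' (StrictBtw i j k) (StrictBtw i l k)

/-- `wT w t` is the word obtained from `w` by changing the letters at the last `t`
unmatched positions of `w` to `0`; that is, if the unmatched positions of `w` are
`p₁ < … < p_m`, the positions `p_{m-t+1}, …, p_m` are changed to `0`. -/
noncomputable def wT (w : Word n) (t : ℕ) : Word n := fun j =>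
  if j ∈ unmatchedPos w ∧ ((unmatchedPos w).filter fun k => j ≤ k).card ≤ t then false
  else w j

/-- The order on necklaces (the poset `Bₙ/Cₙ`): `u ≤ v` iff there are representatives
`w` of `u` and `w'` of `v` such that every position carrying `1` in `w` also carries `1`
in `w'`. -/
def nle (u v : Necklace n) : Prop :=
  ∃ w w' : Word n, nec w = u ∧ nec w' = v ∧ ∀ i, w i = true → w' i = true

/-- The strict order on necklaces. -/
def nlt (u v : Necklace n) : Prop := nle u v ∧ u ≠ v

/-- `v` covers `u` in `Bₙ/Cₙ`: `u < v` and there is no `z` with `u < z < v`. -/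
def ncovBy (u v : Necklace n) : Prop := nlt u v ∧ ∀ z, nlt u z → ¬ nlt z v

/-- A chain top: a necklace `v` in the upper half of ranks (`2·rank v ≥ n`) which is not
the image under `φ` of any necklace in the strict upper half of ranks. -/
def IsChainTop (v : Necklace n) : Prop :=
  n ≤ 2 * rank v ∧ ∀ u : Necklace n, n < 2 * rank u → phi u ≠ v

/-- The `φ`-string below the chain top `v`: the necklaces of the words `w_t`,
`0 ≤ t ≤ m`, where `w` is the Lyndon representative of `v` and `m = 2·rank v − n`. -/
noncomputable def chainOf (v : Necklace n) : Set (Necklace n) :=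
  { u | ∃ t ≤ 2 * rank v - n, u = nec (wT (lyndonOf (Quotient.out v)) t) }

/-!
The cyclic matching is the normal form of a terminating rewriting system whose one-step
choices commute, so it is well defined and commutes with rotation. Its pairs are nested, and
when `1`s are in the majority every unmatched position carries a `1`. If `q ≤ p` are the first
and last unmatched positions of a Lyndon word `L`, changing `L p` to `0` leaves the matching
unchanged when `q = p`, and otherwise adds exactly the pair `(p, q)`, which wraps around the end
of the word.

Suppose `φ` maps the Lyndon words `L` and `L'` to rotations of one word `x`, let `K` be the
rotation of `L'` aligned with `x`, and let `p` and `t` be the positions of `x` flipped from `L`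
and from `K`. If `L` has a single unmatched position, `p = t` is the only unmatched position of
`x`. Otherwise, if `p ≠ t`, the pair `(p, q)` created in `x` from `L` is a pair of `K`, and the
pair `(t, u)` created from `K` is a pair of `L`. Nesting forces `q < t < u < p`, and as `t` is
the last unmatched position of `K` read from the start `σ` of `L'`, the position `p` comes
before `t` in that reading. Comparing `L` and `K` from position `0` and from `σ` gives
`L ≤ σL < σK ≤ K < L`, a contradiction.
-/

section FinArith

variable {n : ℕ}

theorem Fin.val_sub_eq_ite (a b : Fin n) :
    (a - b).val = if b.val ≤ a.val then a.val - b.val else a.val + n - b.val := by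
  split_ifs with h
  · exact Fin.sub_val_of_le h
  · rw [Fin.coe_sub_iff_lt.2 (not_le.1 h)]; omega

/-- Adding `c` wraps around between `a` and `b`, hence also between `a` and `d`. -/
theorem Fin.add_lt_add_of_wrap {a b d : Fin n} (c : Fin n) (hab : a < b) (hbd : b < d)
    (hbc : b + c < a + c) : d + c < a + c := by
  simp only [Fin.lt_def, Fin.val_add_eq_ite] at *
  have := d.isLt
  split_ifs at * <;> omega

end FinArith

section Lex

variable {n : ℕ}

theorem lexLE_iff_toLex_le {w w' : Word n} : lexLE w w' ↔ toLex w' ≤ toLex w := by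
  rw [le_iff_eq_or_lt, toLex_inj, eq_comm, lexLE]
  refine or_congr Iff.rfl (exists_congr fun i => ?_)
  change _ ↔ (∀ j < i, w' j = w j) ∧ w' i < w i
  rw [Bool.lt_iff]
  exact ⟨fun ⟨h, h1, h0⟩ => ⟨fun j hj => (h j hj).symm, h0, h1⟩,
    fun ⟨h, h0, h1⟩ => ⟨fun j hj => (h j hj).symm, h1, h0⟩⟩

theorem toLex_lt_toLex_of_eq_false {w w' : Word n} {i : Fin n} (h : ∀ j < i, w j = w' j)
    (hw : w i = false) (hw' : w' i = true) : toLex w < toLex w' :=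
  ⟨i, h, by simp [hw, hw']⟩

end Lex

theorem rot_zero (w : Word n) : rot 0 w = w := by
  funext j; simp [rot]

theorem rot_neg_rot (c : Fin n) (w : Word n) : rot (-c) (rot c w) = w := by
  rw [rot_rot, add_neg_cancel, rot_zero]

theorem rot_update (c a : Fin n) (w : Word n) (v : Bool) :
    rot c (Function.update w a v) = Function.update (rot c w) (a + c) v := by
  funext j
  simp only [rot, Function.update_apply, sub_eq_iff_eq_add]

theorem nec_eq_nec_iff {w w' : Word n} : nec w = nec w' ↔ ∃ i, rot i w = w' :=
  ⟨Quotient.exact, fun h => Quotient.sound h⟩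

theorem exists_isLyndon_rot (w : Word n) : ∃ i, IsLyndon (rot i w) := by
  obtain ⟨i, -, hi⟩ :=
    Finset.univ.exists_max_image (fun i => toLex (rot i w)) Finset.univ_nonempty
  exact ⟨i, fun j => lexLE_iff_toLex_le.2 (by rw [rot_rot]; exact hi _ (Finset.mem_univ _))⟩

theorem lyndonOf_eq_rot (w : Word n) : ∃ i, lyndonOf w = rot i w := by
  rw [lyndonOf, dif_pos (exists_isLyndon_rot w)]
  exact ⟨_, rfl⟩

theorem isLyndon_lyndonOf (w : Word n) : IsLyndon (lyndonOf w) := by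
  rw [lyndonOf, dif_pos (exists_isLyndon_rot w)]
  exact (exists_isLyndon_rot w).choose_spec

theorem nec_lyndonOf (w : Word n) : nec (lyndonOf w) = nec w := by
  obtain ⟨i, hi⟩ := lyndonOf_eq_rot w
  exact (nec_eq_nec_iff.2 ⟨i, hi.symm⟩).symm

theorem false_of_isLyndon_of_update_eq {L K : Word n} {p t c : Fin n} (hL : IsLyndon L)
    (hK : IsLyndon (rot c K)) (htp : t < p) (hptc : p + c < t + c) (hLp : L p = true)
    (hKt : K t = true) (hLK : Function.update L p false = Function.update K t false) : False := by
  have hagree : ∀ a, a ≠ p → a ≠ t → L a = K a := fun a hap hat => by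
    simpa [Function.update_of_ne hap, Function.update_of_ne hat] using congrFun hLK a
  have hKp : K p = false := by
    simpa [Function.update_of_ne htp.ne'] using (congrFun hLK p).symm
  have hLt : L t = false := by
    simpa [Function.update_of_ne htp.ne] using congrFun hLK t
  have h₁ : toLex (rot c L) ≤ toLex L := lexLE_iff_toLex_le.1 (hL c)
  have h₂ : toLex (rot c K) < toLex (rot c L) := by
    refine toLex_lt_toLex_of_eq_false (i := p + c) (fun j hj => ?_) (by simpa [rot])
      (by simpa [rot])
    refine (hagree (j - c) ?_ ?_).symm
    · rintro rfl; simp at hj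
    · rintro h; rw [sub_eq_iff_eq_add.1 h] at hj; exact lt_asymm hj hptc
  have h₃ : toLex K ≤ toLex (rot c K) := by
    simpa [rot_neg_rot] using lexLE_iff_toLex_le.1 (hK (-c))
  have h₄ : toLex L < toLex K :=
    toLex_lt_toLex_of_eq_false (fun j hj => hagree j (hj.trans htp).ne hj.ne) hLt hKt
  exact lt_irrefl _ (((h₄.trans_le h₃).trans h₂).trans_le h₁)

section Matching

variable {n : ℕ} {w : Word n} {M N : Finset (Fin n × Fin n)}

theorem mem_matchedPos {a : Fin n} : a ∈ matchedPos M ↔ ∃ p ∈ M, a = p.1 ∨ a = p.2 := by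
  simp only [matchedPos, Finset.mem_union, Finset.mem_image, ← exists_or, ← and_or_left]
  exact exists_congr fun p => and_congr_right' ⟨by rintro (h | h) <;> simp [h], by
    rintro (rfl | rfl) <;> simp⟩

theorem matchedPos_mono (h : M ⊆ N) : matchedPos M ⊆ matchedPos N :=
  Finset.union_subset_union (Finset.image_subset_image h) (Finset.image_subset_image h)

theorem matchedPos_insert (p : Fin n × Fin n) (M : Finset (Fin n × Fin n)) :
    matchedPos (insert p M) = insert p.1 (insert p.2 (matchedPos M)) := by
  ext a
  simp only [matchedPos, Finset.image_insert, Finset.mem_union, Finset.mem_insert]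
  tauto

theorem matchedPos_image_add (c : Fin n) (M : Finset (Fin n × Fin n)) :
    matchedPos (M.image (Prod.map (· + c) (· + c))) = (matchedPos M).image (· + c) := by
  simp only [matchedPos, Finset.image_union, Finset.image_image]
  rfl

theorem firstAfter_right_unique {S : Finset (Fin n)} {i j j' : Fin n} (h : FirstAfter S i j)
    (h' : FirstAfter S i j') : j = j' := by
  have h₁ := h.2.2 j' h'.1 h'.2.1
  have h₂ := h'.2.2 j h.1 h.2.1
  have := Fin.val_sub_eq_ite j i
  have := Fin.val_sub_eq_ite j' i
  ext
  split_ifs at * <;> omega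

theorem firstAfter_left_unique {S : Finset (Fin n)} {i i' j : Fin n} (hi : i ∉ S) (hi' : i' ∉ S)
    (h : FirstAfter S i j) (h' : FirstAfter S i' j) : i = i' := by
  by_contra hne
  have h₁ := h.2.2 i' hi' (Ne.symm hne)
  have h₂ := h'.2.2 i hi hne
  have := Fin.val_sub_eq_ite j i
  have := Fin.val_sub_eq_ite i' i
  have := Fin.val_sub_eq_ite j i'
  have := Fin.val_sub_eq_ite i i'
  have := Fin.val_ne_of_ne hne
  have := Fin.val_ne_of_ne h.2.1
  have := Fin.val_ne_of_ne h'.2.1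
  split_ifs at * <;> omega

structure IsNestedMatching (w : Word n) (M : Finset (Fin n × Fin n)) : Prop where
  fst_eq_false : ∀ p ∈ M, w p.1 = false
  snd_eq_true : ∀ p ∈ M, w p.2 = true
  injOn_fst : Set.InjOn Prod.fst (M : Set (Fin n × Fin n))
  injOn_snd : Set.InjOn Prod.snd (M : Set (Fin n × Fin n))
  mem_matchedPos_of_strictBtw : ∀ p ∈ M, ∀ k, StrictBtw p.1 k p.2 → k ∈ matchedPos M

theorem IsNestedMatching.matchStep (h : IsNestedMatching w M) (hs : MatchStep w M N) :
    IsNestedMatching w N := by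
  obtain ⟨hi, hwi, ⟨hj, hji, hfirst⟩, hwj⟩ := hs
  rename_i i j
  have hij : (i, j) ∉ M := fun hij => hi (mem_matchedPos.2 ⟨_, hij, Or.inl rfl⟩)
  have hsub := matchedPos_mono (Finset.subset_insert (i, j) M)
  refine ⟨?_, ?_, ?_, ?_, ?_⟩
  · simpa [hwi] using h.fst_eq_false
  · simpa [hwj] using h.snd_eq_true
  · rw [Finset.coe_insert, Set.injOn_insert (by simpa using hij)]
    exact ⟨h.injOn_fst, fun ⟨p, hp, hpi⟩ =>
      hi (mem_matchedPos.2 ⟨p, hp, Or.inl hpi.symm⟩)⟩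
  · rw [Finset.coe_insert, Set.injOn_insert (by simpa using hij)]
    exact ⟨h.injOn_snd, fun ⟨p, hp, hpj⟩ =>
      hj (mem_matchedPos.2 ⟨p, hp, Or.inr hpj.symm⟩)⟩
  · rw [Finset.forall_mem_insert]
    refine ⟨fun k hk => ?_, fun p hp k hk => hsub (h.mem_matchedPos_of_strictBtw p hp k hk)⟩
    by_contra hkN
    have hki : k ≠ i := by
      rintro rfl
      have h0 : 0 < (k - k).val := hk.1
      have := Fin.val_sub_eq_ite k k
      split_ifs at * <;> omega
    exact hk.2.not_ge (hfirst k (fun hk' => hkN (hsub hk')) hki)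

theorem isNestedMatching_of_reflTransGen (h : Relation.ReflTransGen (MatchStep w) ∅ M) :
    IsNestedMatching w M := by
  induction h with
  | refl => exact ⟨by simp, by simp, by simp, by simp, by simp⟩
  | tail _ hs ih => exact ih.matchStep hs

theorem matchStep_diamond {N₁ N₂ : Finset (Fin n × Fin n)} (h₁ : MatchStep w M N₁)
    (h₂ : MatchStep w M N₂) :
    N₁ = N₂ ∨ ∃ P, MatchStep w N₁ P ∧ MatchStep w N₂ P := by
  obtain ⟨hi, hwi, hj, hwj⟩ := h₁
  obtain ⟨hi', hwi', hj', hwj'⟩ := h₂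
  rename_i i j i' j'
  by_cases hii : i = i'
  · subst hii
    rw [firstAfter_right_unique hj hj']
    exact Or.inl rfl
  have hji' : j ≠ i' := by rintro rfl; simp [hwj] at hwi'
  have hj'i : j' ≠ i := by rintro rfl; simp [hwj'] at hwi
  have hjj' : j ≠ j' := by
    rintro rfl
    exact hii (firstAfter_left_unique hi hi' hj hj')
  refine Or.inr ⟨insert (i', j') (insert (i, j) M), ?_, ?_⟩
  · refine MatchStep.step ?_ hwi' ?_ hwj'
    · simpa [matchedPos_insert, Ne.symm hii, Ne.symm hji'] using hi'
    · refine ⟨?_, hj'.2.1, fun k hk hki => hj'.2.2 k (fun h => hk ?_) hki⟩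
      · simpa [matchedPos_insert, hj'i, Ne.symm hjj'] using hj'.1
      · exact matchedPos_mono (Finset.subset_insert _ _) h
  · rw [Finset.insert_comm]
    refine MatchStep.step ?_ hwi ?_ hwj
    · simpa [matchedPos_insert, hii, Ne.symm hj'i] using hi
    · refine ⟨?_, hj.2.1, fun k hk hki => hj.2.2 k (fun h => hk ?_) hki⟩
      · simpa [matchedPos_insert, hji', hjj'] using hj.1
      · exact matchedPos_mono (Finset.subset_insert _ _) h

theorem IsMaximalMatching.unique {M₁ M₂ : Finset (Fin n × Fin n)}
    (h₁ : IsMaximalMatching w M₁) (h₂ : IsMaximalMatching w M₂) : M₁ = M₂ := by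
  obtain ⟨M, hM₁, hM₂⟩ := Relation.church_rosser (fun _ _ _ hab hac => by
      rcases matchStep_diamond hab hac with rfl | ⟨P, hP₁, hP₂⟩
      · exact ⟨_, Relation.ReflGen.refl, Relation.ReflTransGen.refl⟩
      · exact ⟨P, Relation.ReflGen.single hP₁, Relation.ReflTransGen.single hP₂⟩)
    h₁.1 h₂.1
  have terminal : ∀ {A}, (∀ B, ¬ MatchStep w A B) →
      Relation.ReflTransGen (MatchStep w) A M → A = M := fun hA hAM => by
    rcases hAM.cases_head with rfl | ⟨B, hB, -⟩
    · rfl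
    · exact absurd hB (hA B)
  rw [terminal h₁.2 hM₁, terminal h₂.2 hM₂]

theorem exists_isMaximalMatching (w : Word n) : ∃ M, IsMaximalMatching w M := by
  classical
  obtain ⟨M, hM, hmax⟩ :=
    (Finset.univ.filter (Relation.ReflTransGen (MatchStep w) ∅)).exists_max_image Finset.card
      ⟨∅, by simp [Relation.ReflTransGen.refl]⟩
  refine ⟨M, (Finset.mem_filter.1 hM).2, fun N hN => ?_⟩
  have hN' :=
    hmax N (Finset.mem_filter.2 ⟨Finset.mem_univ _, (Finset.mem_filter.1 hM).2.tail hN⟩)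
  obtain ⟨hi, -, -, -⟩ := hN
  rw [Finset.card_insert_of_notMem fun h => hi (mem_matchedPos.2 ⟨_, h, Or.inl rfl⟩)] at hN'
  omega

theorem isMaximalMatching_matching (w : Word n) : IsMaximalMatching w (matching w) := by
  rw [matching, dif_pos (exists_isMaximalMatching w)]
  exact (exists_isMaximalMatching w).choose_spec

theorem matching_eq_of_isMaximalMatching (h : IsMaximalMatching w M) : matching w = M :=
  (isMaximalMatching_matching w).unique h

theorem isNestedMatching_matching (w : Word n) : IsNestedMatching w (matching w) :=
  isNestedMatching_of_reflTransGen (isMaximalMatching_matching w).1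

theorem mem_unmatchedPos {a : Fin n} : a ∈ unmatchedPos w ↔ a ∉ matchedPos (matching w) := by
  simp [unmatchedPos]

end Matching

section Unmatched

variable {n : ℕ} {w : Word n}

theorem eq_true_of_mem_unmatchedPos_of_eq_true {a b : Fin n} (ha : a ∈ unmatchedPos w)
    (hb : b ∈ unmatchedPos w) (hwb : w b = true) : w a = true := by
  by_contra hwa
  rw [Bool.not_eq_true] at hwa
  -- an unmatched `0` followed by an unmatched `1` at minimal cyclic distance could still be matched
  let P := Finset.univ.filter fun p : Fin n × Fin n =>
    p.1 ∈ unmatchedPos w ∧ p.2 ∈ unmatchedPos w ∧ w p.1 = false ∧ w p.2 = true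
  obtain ⟨⟨i, j⟩, hP, hmin⟩ := P.exists_min_image (fun p => (p.2 - p.1).val)
    ⟨(a, b), by simp [P, ha, hb, hwa, hwb]⟩
  simp only [P, Finset.mem_filter, Finset.mem_univ, true_and, and_imp, Prod.forall] at hP hmin
  obtain ⟨hi, hj, hwi, hwj⟩ := hP
  have hji : j ≠ i := by rintro rfl; simp [hwi] at hwj
  refine (isMaximalMatching_matching w).2 _ (MatchStep.step (mem_unmatchedPos.1 hi) hwi
    ⟨mem_unmatchedPos.1 hj, hji, fun k hk hki => ?_⟩ hwj)
  have hkU : k ∈ unmatchedPos w := mem_unmatchedPos.2 hk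
  have := Fin.val_sub_eq_ite j i
  have := Fin.val_sub_eq_ite k i
  have := Fin.val_sub_eq_ite j k
  have := Fin.val_ne_of_ne hki
  have := Fin.val_ne_of_ne hji
  cases hwk : w k
  · have := hmin k j hkU hj hwk hwj
    split_ifs at * <;> omega
  · exact hmin i k hi hkU hwi hwk

theorem mem_image_fst_of_eq_false {M : Finset (Fin n × Fin n)} (h : IsNestedMatching w M)
    {a : Fin n} (ha : a ∈ matchedPos M) (hwa : w a = false) : a ∈ M.image Prod.fst := by
  obtain ⟨p, hp, rfl | rfl⟩ := mem_matchedPos.1 ha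
  · exact Finset.mem_image_of_mem _ hp
  · simp [h.snd_eq_true p hp] at hwa

theorem mem_image_snd_of_eq_true {M : Finset (Fin n × Fin n)} (h : IsNestedMatching w M)
    {a : Fin n} (ha : a ∈ matchedPos M) (hwa : w a = true) : a ∈ M.image Prod.snd := by
  obtain ⟨p, hp, rfl | rfl⟩ := mem_matchedPos.1 ha
  · simp [h.fst_eq_false p hp] at hwa
  · exact Finset.mem_image_of_mem _ hp

theorem IsNestedMatching.card_matchedPos {M : Finset (Fin n × Fin n)} (h : IsNestedMatching w M) :
    (matchedPos M).card = 2 * M.card := by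
  rw [matchedPos, Finset.card_union_of_disjoint, Finset.card_image_of_injOn h.injOn_fst,
    Finset.card_image_of_injOn h.injOn_snd, two_mul]
  refine Finset.disjoint_left.2 fun a ha hb => ?_
  obtain ⟨p, hp, rfl⟩ := Finset.mem_image.1 ha
  obtain ⟨q, hq, hqp⟩ := Finset.mem_image.1 hb
  simpa [hqp, h.fst_eq_false p hp] using h.snd_eq_true q hq

theorem wt_add_zeros (w : Word n) : wt w + zeros w = n := by
  simpa [wt, zeros] using Finset.card_filter_add_card_filter_not (s := Finset.univ) (w · = true)

theorem eq_true_of_mem_unmatchedPos (hmaj : n < 2 * wt w) {a : Fin n}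
    (ha : a ∈ unmatchedPos w) : w a = true := by
  by_contra hwa
  have h := isNestedMatching_matching w
  have hones : Finset.univ.filter (w · = true) ⊆ (matching w).image Prod.snd := fun b hb => by
    rw [Finset.mem_filter] at hb
    refine mem_image_snd_of_eq_true h ?_ hb.2
    by_contra hbM
    exact hwa (eq_true_of_mem_unmatchedPos_of_eq_true ha (mem_unmatchedPos.2 hbM) hb.2)
  have hzeros : (matching w).image Prod.fst ⊆ Finset.univ.filter (w · = false) := fun b hb => by
    obtain ⟨p, hp, rfl⟩ := Finset.mem_image.1 hb
    simpa using h.fst_eq_false p hp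
  have h₁ := Finset.card_le_card hones
  have h₂ := Finset.card_le_card hzeros
  rw [Finset.card_image_of_injOn h.injOn_snd] at h₁
  rw [Finset.card_image_of_injOn h.injOn_fst] at h₂
  have := wt_add_zeros w
  simp only [wt, zeros] at *
  omega

theorem card_unmatchedPos (hmaj : n < 2 * wt w) : (unmatchedPos w).card = 2 * wt w - n := by
  have h := isNestedMatching_matching w
  have hzeros : Finset.univ.filter (w · = false) = (matching w).image Prod.fst := by
    ext b
    refine ⟨fun hb => mem_image_fst_of_eq_false h ?_ (Finset.mem_filter.1 hb).2, fun hb => ?_⟩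
    · by_contra hbM
      simpa [(Finset.mem_filter.1 hb).2] using
        eq_true_of_mem_unmatchedPos hmaj (mem_unmatchedPos.2 hbM)
    · obtain ⟨p, hp, rfl⟩ := Finset.mem_image.1 hb
      simpa using h.fst_eq_false p hp
  have hcard : zeros w = (matching w).card := by
    rw [zeros, hzeros, Finset.card_image_of_injOn h.injOn_fst]
  rw [unmatchedPos, Finset.card_univ_sdiff, Fintype.card_fin, h.card_matchedPos]
  have := wt_add_zeros w
  omega

theorem unmatchedPos_nonempty (hmaj : n < 2 * wt w) : (unmatchedPos w).Nonempty := by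
  rw [← Finset.card_pos, card_unmatchedPos hmaj]
  omega

theorem lt_and_lt_of_mem_unmatchedPos {a b k : Fin n} (hab : (a, b) ∈ matching w) (hba : b < a)
    (hk : k ∈ unmatchedPos w) : b < k ∧ k < a := by
  have h := isNestedMatching_matching w
  have hk' := mem_unmatchedPos.1 hk
  have hka : k ≠ a := by rintro rfl; exact hk' (mem_matchedPos.2 ⟨_, hab, Or.inl rfl⟩)
  have hkb : k ≠ b := by rintro rfl; exact hk' (mem_matchedPos.2 ⟨_, hab, Or.inr rfl⟩)
  have hout : ¬ StrictBtw a k b := fun hin => hk' (h.mem_matchedPos_of_strictBtw _ hab k hin)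
  simp only [StrictBtw, Fin.lt_def, not_and, not_lt] at hout ⊢
  have := Fin.val_sub_eq_ite k a
  have := Fin.val_sub_eq_ite b a
  have := Fin.val_ne_of_ne hka
  have := Fin.val_ne_of_ne hkb
  have := k.isLt
  split_ifs at * <;> omega

theorem reflTransGen_of_eqOn {w' : Word n} {M : Finset (Fin n × Fin n)}
    (h : Relation.ReflTransGen (MatchStep w) ∅ M) (hww' : ∀ a ∈ matchedPos M, w a = w' a) :
    Relation.ReflTransGen (MatchStep w') ∅ M := by
  induction h with
  | refl => exact .refl
  | tail _ hs ih =>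
    obtain ⟨hi, hwi, hj, hwj⟩ := hs
    rw [matchedPos_insert] at hww'
    refine (ih fun a ha => hww' a (by simp [ha])).tail (MatchStep.step hi ?_ hj ?_)
    · rwa [← hww' _ (by simp)]
    · rwa [← hww' _ (by simp)]

theorem reflTransGen_update {p : Fin n} (hp : p ∈ unmatchedPos w) (v : Bool) :
    Relation.ReflTransGen (MatchStep (Function.update w p v)) ∅ (matching w) :=
  reflTransGen_of_eqOn (isMaximalMatching_matching w).1 fun a ha =>
    (Function.update_of_ne (by rintro rfl; exact mem_unmatchedPos.1 hp ha) _ _).symm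

theorem isMaximalMatching_update_of_unmatchedPos_eq {p : Fin n} (hU : unmatchedPos w = {p})
    (v : Bool) : IsMaximalMatching (Function.update w p v) (matching w) := by
  refine ⟨reflTransGen_update (by simp [hU]) v, fun N hN => ?_⟩
  obtain ⟨hi, -, ⟨hj, hji, -⟩, -⟩ := hN
  have hi' : _ ∈ unmatchedPos w := mem_unmatchedPos.2 hi
  have hj' : _ ∈ unmatchedPos w := mem_unmatchedPos.2 hj
  rw [hU, Finset.mem_singleton] at hi' hj'
  exact hji (hj'.trans hi'.symm)

theorem isMaximalMatching_update_of_lt (hT : ∀ a ∈ unmatchedPos w, w a = true) {p q : Fin n}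
    (hp : IsGreatest (unmatchedPos w : Set (Fin n)) p)
    (hq : IsLeast (unmatchedPos w : Set (Fin n)) q)
    (hqp : q < p) :
    IsMaximalMatching (Function.update w p false) (insert (p, q) (matching w)) := by
  have hwq : Function.update w p false q = true := by
    rw [Function.update_of_ne hqp.ne]; exact hT q hq.1
  have hfirst : FirstAfter (matchedPos (matching w)) p q := by
    refine ⟨mem_unmatchedPos.1 hq.1, hqp.ne, fun k hk hkp => ?_⟩
    have hkU : k ∈ unmatchedPos w := mem_unmatchedPos.2 hk
    have h₁ : q ≤ k := hq.2 hkU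
    have h₂ : k < p := lt_of_le_of_ne (hp.2 hkU) hkp
    rw [Fin.le_def] at h₁
    rw [Fin.lt_def] at h₂ hqp
    have := Fin.val_sub_eq_ite q p
    have := Fin.val_sub_eq_ite k p
    split_ifs at * <;> omega
  refine ⟨(reflTransGen_update hp.1 false).tail
    (MatchStep.step (mem_unmatchedPos.1 hp.1) (by simp) hfirst hwq), fun N hN => ?_⟩
  obtain ⟨hi, hwi, -, -⟩ := hN
  rename_i i j
  simp only [matchedPos_insert, Finset.mem_insert, not_or] at hi
  rw [Function.update_of_ne hi.1, hT i (mem_unmatchedPos.2 hi.2.2)] at hwi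
  exact Bool.noConfusion hwi

theorem wt_update_false_add_one {p : Fin n} (hp : w p = true) :
    wt (Function.update w p false) + 1 = wt w := by
  have : Finset.univ.filter (Function.update w p false · = true) =
      (Finset.univ.filter (w · = true)).erase p := by
    ext a
    by_cases hap : a = p <;> simp [hap]
  rw [wt, this, Finset.card_erase_add_one (by simpa using hp), wt]

end Unmatched

section Rotation

variable {w : Word n}

theorem wt_rot (c : Fin n) (w : Word n) : wt (rot c w) = wt w := by
  refine Finset.card_bij' (fun i _ => i - c) (fun i _ => i + c) (fun a ha => ?_) (fun a ha => ?_)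
    (by simp) (by simp)
  · exact Finset.mem_filter.2 ⟨Finset.mem_univ _, (Finset.mem_filter.1 ha).2⟩
  · exact Finset.mem_filter.2
      ⟨Finset.mem_univ _, by simpa [rot] using (Finset.mem_filter.1 ha).2⟩

theorem wt_lyndonOf (w : Word n) : wt (lyndonOf w) = wt w := by
  obtain ⟨i, hi⟩ := lyndonOf_eq_rot w
  rw [hi, wt_rot]

theorem firstAfter_image_add {S : Finset (Fin n)} {i j : Fin n} (c : Fin n)
    (h : FirstAfter S i j) : FirstAfter (S.image (· + c)) (i + c) (j + c) := by
  refine ⟨by simpa using h.1, by simpa using h.2.1, fun k hk hki => ?_⟩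
  rw [add_sub_add_right_eq_sub, ← sub_add_cancel k c, add_sub_add_right_eq_sub]
  exact h.2.2 (k - c) (by simpa [sub_eq_add_neg] using hk) (by rintro rfl; simp at hki)

theorem matchStep_rot {M N : Finset (Fin n × Fin n)} (c : Fin n) (h : MatchStep w M N) :
    MatchStep (rot c w) (M.image (Prod.map (· + c) (· + c)))
      (N.image (Prod.map (· + c) (· + c))) := by
  obtain ⟨hi, hwi, hj, hwj⟩ := h
  rw [Finset.image_insert]
  refine MatchStep.step ?_ (by simpa [rot] using hwi) ?_ (by simpa [rot] using hwj)
  · simpa [matchedPos_image_add] using hi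
  · rw [matchedPos_image_add]
    exact firstAfter_image_add c hj

theorem isMaximalMatching_rot {M : Finset (Fin n × Fin n)} (c : Fin n)
    (h : IsMaximalMatching w M) :
    IsMaximalMatching (rot c w) (M.image (Prod.map (· + c) (· + c))) := by
  refine ⟨?_, fun N hN => ?_⟩
  · have reach : ∀ {B}, Relation.ReflTransGen (MatchStep w) ∅ B →
        Relation.ReflTransGen (MatchStep (rot c w)) ∅ (B.image (Prod.map (· + c) (· + c))) :=
      fun hB => by
        induction hB with
        | refl => simpa using Relation.ReflTransGen.refl
        | tail _ hs ih => exact ih.tail (matchStep_rot c hs)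
    exact reach h.1
  · have hback := matchStep_rot (-c) hN
    have hid : Prod.map (· + -c) (· + -c) ∘ Prod.map (· + c) (· + c) =
        (id : Fin n × Fin n → _) := by
      funext p; simp [Prod.map]
    rw [rot_neg_rot, Finset.image_image, hid, Finset.image_id] at hback
    exact h.2 _ hback

theorem matching_rot (c : Fin n) (w : Word n) :
    matching (rot c w) = (matching w).image (Prod.map (· + c) (· + c)) :=
  matching_eq_of_isMaximalMatching (isMaximalMatching_rot c (isMaximalMatching_matching w))

theorem mem_matching_rot {c a b : Fin n} :
    (a, b) ∈ matching (rot c w) ↔ (a - c, b - c) ∈ matching w := by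
  rw [matching_rot, Finset.mem_image]
  constructor
  · rintro ⟨p, hp, hpab⟩
    simp only [Prod.map, Prod.mk.injEq] at hpab
    simpa [← hpab.1, ← hpab.2] using hp
  · exact fun h => ⟨_, h, by simp⟩

theorem mem_unmatchedPos_rot {c a : Fin n} :
    a ∈ unmatchedPos (rot c w) ↔ a - c ∈ unmatchedPos w := by
  rw [mem_unmatchedPos, mem_unmatchedPos, matching_rot, matchedPos_image_add, Finset.mem_image]
  exact not_congr
    ⟨fun ⟨b, hb, hba⟩ => by simpa [← hba] using hb, fun h => ⟨_, h, by simp⟩⟩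

end Rotation

section Rigidity

variable {L L' : Word n} {p p' c : Fin n}

theorem top_rot_eq_of_unmatchedPos_eq_singleton (hU : unmatchedPos L = {p})
    (hU' : unmatchedPos L' = {p'})
    (hc : rot c (Function.update L p false) = Function.update L' p' false) : p' = p + c := by
  have hx : unmatchedPos (Function.update L p false) = {p} := by
    rw [← hU]
    simp only [unmatchedPos,
      matching_eq_of_isMaximalMatching (isMaximalMatching_update_of_unmatchedPos_eq hU false)]
  have hx' : p' ∈ unmatchedPos (Function.update L' p' false) := by
    simp only [unmatchedPos,
      matching_eq_of_isMaximalMatching (isMaximalMatching_update_of_unmatchedPos_eq hU' false)]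
    simpa [unmatchedPos] using hU'.ge (Finset.mem_singleton_self p')
  rwa [← hc, mem_unmatchedPos_rot, hx, Finset.mem_singleton, sub_eq_iff_eq_add] at hx'

theorem top_rot_eq_of_lt {q q' : Fin n} (hL : IsLyndon L) (hL' : IsLyndon L')
    (hT : ∀ a ∈ unmatchedPos L, L a = true) (hT' : ∀ a ∈ unmatchedPos L', L' a = true)
    (hp : IsGreatest (unmatchedPos L : Set (Fin n)) p)
    (hq : IsLeast (unmatchedPos L : Set (Fin n)) q)
    (hp' : IsGreatest (unmatchedPos L' : Set (Fin n)) p')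
    (hq' : IsLeast (unmatchedPos L' : Set (Fin n)) q') (hqp : q < p) (hq'p' : q' < p')
    (hc : rot c (Function.update L p false) = Function.update L' p' false) : p' = p + c := by
  have hM := matching_eq_of_isMaximalMatching (isMaximalMatching_update_of_lt hT hp hq hqp)
  have hM' := matching_eq_of_isMaximalMatching (isMaximalMatching_update_of_lt hT' hp' hq' hq'p')
  by_contra hne
  -- `K` is `L'` aligned with `L`: both are flipped to the same word, at `p' - c` and at `p`
  set K := rot (-c) L' with hK
  have hKL' : rot c K = L' := by rw [hK, rot_rot, neg_add_cancel, rot_zero]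
  have hLK : Function.update L p false = Function.update K (p' - c) false := by
    rw [hK, ← rot_neg_rot c (Function.update L p false), hc, rot_update, sub_eq_add_neg]
  have htu : (p' - c, q' - c) ∈ matching L := by
    have h : (p', q') ∈ matching (rot c (Function.update L p false)) := by
      rw [hc, hM']; exact Finset.mem_insert_self _ _
    rw [mem_matching_rot, hM, Finset.mem_insert, Prod.mk.injEq, sub_eq_iff_eq_add] at h
    exact h.resolve_left fun h => hne h.1
  have hpq : (p, q) ∈ matching K := by
    have h : (p + c, q + c) ∈ matching (rot c (Function.update L p false)) := by
      rw [mem_matching_rot, add_sub_cancel_right, add_sub_cancel_right, hM]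
      exact Finset.mem_insert_self _ _
    rw [hc, hM', Finset.mem_insert, Prod.mk.injEq] at h
    rw [hK, mem_matching_rot, sub_neg_eq_add, sub_neg_eq_add]
    exact h.resolve_left fun h => hne h.1.symm
  have hKU : ∀ {a}, a ∈ unmatchedPos L' → a - c ∈ unmatchedPos K := fun ha => by
    rwa [hK, mem_unmatchedPos_rot, sub_neg_eq_add, sub_add_cancel]
  have htp := (lt_and_lt_of_mem_unmatchedPos hpq hqp (hKU hp'.1)).2
  have hup := (lt_and_lt_of_mem_unmatchedPos hpq hqp (hKU hq'.1)).2
  have htu_lt : p' - c < q' - c := by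
    refine lt_of_not_ge fun hut => ?_
    have hut' : q' - c < p' - c := lt_of_le_of_ne hut (by simpa using hq'p'.ne)
    exact lt_asymm htp (lt_and_lt_of_mem_unmatchedPos htu hut' hp.1).2
  have hptc : p + c < p' - c + c :=
    Fin.add_lt_add_of_wrap c htu_lt hup (by simpa using hq'p')
  exact false_of_isLyndon_of_update_eq hL (hKL' ▸ hL') htp hptc (hT p hp.1)
    (by simpa [hK, rot] using hT' p' hp'.1) hLK

theorem top_rot_eq (hL : IsLyndon L) (hL' : IsLyndon L') (hmaj : n < 2 * wt L)
    (hmaj' : n < 2 * wt L') (hp : IsGreatest (unmatchedPos L : Set (Fin n)) p)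
    (hp' : IsGreatest (unmatchedPos L' : Set (Fin n)) p')
    (hc : rot c (Function.update L p false) = Function.update L' p' false) : p' = p + c := by
  have hT : ∀ a ∈ unmatchedPos L, L a = true := fun _ => eq_true_of_mem_unmatchedPos hmaj
  have hT' : ∀ a ∈ unmatchedPos L', L' a = true := fun _ => eq_true_of_mem_unmatchedPos hmaj'
  have hwt : wt L = wt L' := by
    have h₁ := wt_update_false_add_one (hT p hp.1)
    have h₂ := wt_update_false_add_one (hT' p' hp'.1)
    rw [← hc, wt_rot] at h₂
    omega
  have hcard : (unmatchedPos L').card = (unmatchedPos L).card := by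
    rw [card_unmatchedPos hmaj, card_unmatchedPos hmaj', hwt]
  have hne : (unmatchedPos L).Nonempty := ⟨p, hp.1⟩
  have hne' : (unmatchedPos L').Nonempty := ⟨p', hp'.1⟩
  obtain h₁ | h₂ : (unmatchedPos L).card = 1 ∨ 1 < (unmatchedPos L).card := by
    have := hne.card_pos; omega
  · refine top_rot_eq_of_unmatchedPos_eq_singleton ?_ ?_ hc
    · exact Finset.eq_singleton_iff_unique_mem.2
        ⟨hp.1, fun a ha => Finset.card_le_one.1 h₁.le a ha p hp.1⟩
    · exact Finset.eq_singleton_iff_unique_mem.2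
        ⟨hp'.1, fun a ha => Finset.card_le_one.1 (hcard.trans h₁).le a ha p' hp'.1⟩
  · exact top_rot_eq_of_lt hL hL' hT hT' hp (Finset.isLeast_min' _ hne) hp'
      (Finset.isLeast_min' _ hne')
      ((Finset.min'_lt_max'_of_card _ h₂).trans_eq ((Finset.isGreatest_max' _ hne).unique hp))
      ((Finset.min'_lt_max'_of_card _ (hcard ▸ h₂)).trans_eq
        ((Finset.isGreatest_max' _ hne').unique hp')) hc

theorem rot_eq_of_rot_flipTop_eq (hL : IsLyndon L) (hL' : IsLyndon L') (hmaj : n < 2 * wt L)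
    (hmaj' : n < 2 * wt L') (hc : rot c (flipTop L) = flipTop L') : rot c L = L' := by
  have hne := unmatchedPos_nonempty hmaj
  have hne' := unmatchedPos_nonempty hmaj'
  rw [flipTop, dif_pos hne, flipTop, dif_pos hne'] at hc
  have hp := Finset.isGreatest_max' _ hne
  have hp' := Finset.isGreatest_max' _ hne'
  set p := (unmatchedPos L).max' hne
  set p' := (unmatchedPos L').max' hne'
  calc rot c L = rot c (Function.update (Function.update L p false) p true) := by
        rw [Function.update_idem, ← eq_true_of_mem_unmatchedPos hmaj hp.1,
          Function.update_eq_self]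
    _ = Function.update (Function.update L' p' false) p' true := by
        rw [rot_update, hc, top_rot_eq hL hL' hmaj hmaj' hp hp' hc]
    _ = L' := by
        rw [Function.update_idem, ← eq_true_of_mem_unmatchedPos hmaj' hp'.1,
          Function.update_eq_self]

end Rigidity

/-- The map `φ` is injective on the upper half of ranks: if `u` and `u'`
are necklaces of length `n` with `2·rank u > n` and `2·rank u' > n` and
`φ(u) = φ(u')`, then `u = u'`. -/
theorem phi_injective_upper_half (n : ℕ) [NeZero n] (u u' : Necklace n)
    (hu : n < 2 * rank u) (hu' : n < 2 * rank u')
    (h : phi u = phi u') :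
    u = u' := by
  obtain ⟨c, hc⟩ := nec_eq_nec_iff.1 h
  have hrot := rot_eq_of_rot_flipTop_eq (isLyndon_lyndonOf _) (isLyndon_lyndonOf _)
    (by rwa [wt_lyndonOf]) (by rwa [wt_lyndonOf]) hc
  have hnec := nec_eq_nec_iff.2 ⟨c, hrot⟩
  rwa [nec_lyndonOf, nec_lyndonOf, nec, nec, Quotient.out_eq, Quotient.out_eq] at hnec
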